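/- Explicit coercivity constant: let u ∈ H^1(Ω, ℂ) be a minimizer of E with |u| ≤ 1 a.e., and suppose λ₂ > 0 satisfies ⟨E''(u) v, v⟩ ≥ λ₂ ‖v‖_{L²}² for all v ∈ (iu)^⊥. Then for all v ∈ (iu)^⊥, ⟨E''(u) v, v⟩ ≥ [λ₂ / (2(λ₂ + 3/2 + ‖A‖_{L^∞}²))] ‖v‖_{H¹_κ}², where ‖v‖_{H¹_κ}² = κ^{-2}‖∇v‖_{L²}² + ‖v‖_{L²}². -/

import Mathlib

open MeasureTheory Filter Complex

noncomputable section

/-- The magnetic gradient `(i/κ)∇v + A v` at a point, built from the value `v x`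
and the (weak) gradient `g x` of `v`. -/
def magGrad {d : ℕ} (κ : ℝ) (A : EuclideanSpace ℝ (Fin d) → EuclideanSpace ℝ (Fin d))
    (v : EuclideanSpace ℝ (Fin d) → ℂ) (g : EuclideanSpace ℝ (Fin d) → EuclideanSpace ℂ (Fin d))
    (x : EuclideanSpace ℝ (Fin d)) : EuclideanSpace ℂ (Fin d) :=
  (Complex.I / (κ : ℂ)) • g x + (WithLp.equiv 2 (Fin d → ℂ)).symm (fun j => ((A x j : ℝ) : ℂ) * v x)

/-- The Ginzburg–Landau energy `E(v) = ½∫_Ω |(i/κ)∇v + Av|² + ½(1-|v|²)² dx`. -/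
def GLenergy {d : ℕ} (Ω : Set (EuclideanSpace ℝ (Fin d))) (κ : ℝ)
    (A : EuclideanSpace ℝ (Fin d) → EuclideanSpace ℝ (Fin d))
    (v : EuclideanSpace ℝ (Fin d) → ℂ)
    (g : EuclideanSpace ℝ (Fin d) → EuclideanSpace ℂ (Fin d)) : ℝ :=
  (1/2) * ∫ x in Ω, (‖magGrad κ A v g x‖ ^ 2 + (1/2) * (1 - ‖v x‖ ^ 2) ^ 2)

/-- `g` is the weak gradient of `f` on `Ω` (distributional derivative against
smooth compactly supported test functions). -/
def IsWeakGradOn {d : ℕ} (Ω : Set (EuclideanSpace ℝ (Fin d)))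
    (f : EuclideanSpace ℝ (Fin d) → ℂ)
    (g : EuclideanSpace ℝ (Fin d) → EuclideanSpace ℂ (Fin d)) : Prop :=
  ∀ φ : EuclideanSpace ℝ (Fin d) → ℝ, ContDiff ℝ (⊤ : ℕ∞) φ → HasCompactSupport φ → tsupport φ ⊆ Ω →
    ∀ j : Fin d, ∫ x in Ω, f x * ((fderiv ℝ φ x (EuclideanSpace.single j 1) : ℝ) : ℂ)
      = - ∫ x in Ω, g x j * ((φ x : ℝ) : ℂ)

/-- The Sobolev space `H¹(Ω, ℂ)`, modeled as a function together with its weak gradient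
and the relevant integrability properties (membership in `L²`, gradient in `L²`; by the
Sobolev embedding for `d = 2, 3` also membership in `L⁴`). -/
structure H1 (d : ℕ) (Ω : Set (EuclideanSpace ℝ (Fin d))) where
  toFun : EuclideanSpace ℝ (Fin d) → ℂ
  grad : EuclideanSpace ℝ (Fin d) → EuclideanSpace ℂ (Fin d)
  memLp2 : MemLp toFun 2 (volume.restrict Ω)
  memLp4 : MemLp toFun 4 (volume.restrict Ω)
  grad_memLp2 : MemLp grad 2 (volume.restrict Ω)
  isWeakGrad : IsWeakGradOn Ω toFun grad

/-- The energy of an `H¹` element. -/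
def H1.energy {d : ℕ} {Ω : Set (EuclideanSpace ℝ (Fin d))} (κ : ℝ)
    (A : EuclideanSpace ℝ (Fin d) → EuclideanSpace ℝ (Fin d)) (v : H1 d Ω) : ℝ :=
  GLenergy Ω κ A v.toFun v.grad

/-- `u` is a minimizer of the Ginzburg–Landau energy over `H¹(Ω, ℂ)`. -/
def IsGLMinimizer {d : ℕ} (Ω : Set (EuclideanSpace ℝ (Fin d))) (κ : ℝ)
    (A : EuclideanSpace ℝ (Fin d) → EuclideanSpace ℝ (Fin d)) (u : H1 d Ω) : Prop :=
  ∀ v : H1 d Ω, u.energy κ A ≤ v.energy κ A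

/-- The first real Fréchet derivative of the GL energy:
`⟨E'(u), v⟩ = Re ∫_Ω ((i/κ)∇u + Au)·conj((i/κ)∇v + Av) − (1−|u|²) u conj(v) dx`. -/
def GLfirst {d : ℕ} (Ω : Set (EuclideanSpace ℝ (Fin d))) (κ : ℝ)
    (A : EuclideanSpace ℝ (Fin d) → EuclideanSpace ℝ (Fin d))
    (u : EuclideanSpace ℝ (Fin d) → ℂ) (gu : EuclideanSpace ℝ (Fin d) → EuclideanSpace ℂ (Fin d))
    (v : EuclideanSpace ℝ (Fin d) → ℂ) (gv : EuclideanSpace ℝ (Fin d) → EuclideanSpace ℂ (Fin d)) : ℝ :=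
  (∫ x in Ω, ((∑ j : Fin d, magGrad κ A u gu x j * (starRingEnd ℂ) (magGrad κ A v gv x j))
      - ((1 - ‖u x‖ ^ 2 : ℝ) : ℂ) * u x * (starRingEnd ℂ) (v x))).re

/-- The second real Fréchet derivative of the GL energy:
`⟨E''(u)v, w⟩ = Re ∫_Ω ((i/κ)∇v + Av)·conj((i/κ)∇w + Aw) − (1−|u|²) v conj(w)
  + 2 Re(u conj(v)) u conj(w) dx`. -/
def GLsecond {d : ℕ} (Ω : Set (EuclideanSpace ℝ (Fin d))) (κ : ℝ)
    (A : EuclideanSpace ℝ (Fin d) → EuclideanSpace ℝ (Fin d))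
    (u : EuclideanSpace ℝ (Fin d) → ℂ)
    (v : EuclideanSpace ℝ (Fin d) → ℂ) (gv : EuclideanSpace ℝ (Fin d) → EuclideanSpace ℂ (Fin d))
    (w : EuclideanSpace ℝ (Fin d) → ℂ) (gw : EuclideanSpace ℝ (Fin d) → EuclideanSpace ℂ (Fin d)) : ℝ :=
  (∫ x in Ω, ((∑ j : Fin d, magGrad κ A v gv x j * (starRingEnd ℂ) (magGrad κ A w gw x j))
      - ((1 - ‖u x‖ ^ 2 : ℝ) : ℂ) * v x * (starRingEnd ℂ) (w x)
      + 2 * (((u x * (starRingEnd ℂ) (v x)).re : ℝ) : ℂ) * u x * (starRingEnd ℂ) (w x))).re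

/-- The squared κ-weighted `H¹` norm `‖v‖²_{H¹_κ} = κ⁻²‖∇v‖²_{L²} + ‖v‖²_{L²}`. -/
def H1κnormSq {d : ℕ} (Ω : Set (EuclideanSpace ℝ (Fin d))) (κ : ℝ) (v : H1 d Ω) : ℝ :=
  κ⁻¹ ^ 2 * (∫ x in Ω, ‖v.grad x‖ ^ 2) + ∫ x in Ω, ‖v.toFun x‖ ^ 2

/-- Membership in the (real) orthogonal complement `(iu)^⊥` of the phase mode:
`Re ∫_Ω (iu) conj(v) dx = 0`. -/
def PerpPhase {d : ℕ} (Ω : Set (EuclideanSpace ℝ (Fin d))) (u v : H1 d Ω) : Prop :=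
  (∫ x in Ω, (Complex.I * u.toFun x) * (starRingEnd ℂ) (v.toFun x)).re = 0


/-- Pointwise Gårding bound for the second-variation integrand. -/
lemma ptBound {d : ℕ} {κ M : ℝ} (hκ : 0 < κ) (hM : 0 ≤ M)
    {A : EuclideanSpace ℝ (Fin d) → EuclideanSpace ℝ (Fin d)}
    {uu vv : EuclideanSpace ℝ (Fin d) → ℂ}
    {gg : EuclideanSpace ℝ (Fin d) → EuclideanSpace ℂ (Fin d)}
    {x : EuclideanSpace ℝ (Fin d)} (hAx : ‖A x‖ ≤ M) :
    (1/2) * κ⁻¹ ^ 2 * ‖gg x‖ ^ 2 - (M ^ 2 + 1) * ‖vv x‖ ^ 2 ≤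
      ‖magGrad κ A vv gg x‖ ^ 2 + (‖uu x‖ ^ 2 - 1) * ‖vv x‖ ^ 2
        + 2 * ((uu x * (starRingEnd ℂ) (vv x)).re) ^ 2 := by
  set a := (Complex.I / (κ : ℂ)) • gg x with ha_def
  set b := (WithLp.equiv 2 (Fin d → ℂ)).symm (fun j => ((A x j : ℝ) : ℂ) * vv x) with hb_def
  have hmg : magGrad κ A vv gg x = a + b := rfl
  have ha : ‖a‖ = κ⁻¹ * ‖gg x‖ := by
    rw [ha_def, norm_smul, norm_div, Complex.norm_I, Complex.norm_real, Real.norm_eq_abs,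
      abs_of_pos hκ, one_div]
  have hb : ‖b‖ = ‖A x‖ * ‖vv x‖ := by
    rw [hb_def, EuclideanSpace.norm_eq, EuclideanSpace.norm_eq (A x)]
    have : ∀ j : Fin d, ‖(WithLp.equiv 2 (Fin d → ℂ)).symm
        (fun j => ((A x j : ℝ) : ℂ) * vv x) j‖ ^ 2 = ‖A x j‖ ^ 2 * ‖vv x‖ ^ 2 := by
      intro j
      rw [WithLp.equiv_symm_apply, PiLp.toLp_apply, norm_mul, Complex.norm_real, mul_pow]
    simp_rw [this]
    rw [← Finset.sum_mul, Real.sqrt_mul (by positivity), Real.sqrt_sq (norm_nonneg _)]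
  have htri : ‖a‖ ≤ ‖a + b‖ + ‖b‖ := by
    simpa using norm_sub_le (a + b) b
  have hsq : ‖a‖ * ‖a‖ ≤ (‖a + b‖ + ‖b‖) * (‖a + b‖ + ‖b‖) :=
    mul_self_le_mul_self (norm_nonneg a) htri
  have hb2 : ‖b‖ ^ 2 ≤ M ^ 2 * ‖vv x‖ ^ 2 := by
    rw [hb, mul_pow]
    have : ‖A x‖ ^ 2 ≤ M ^ 2 := by nlinarith [norm_nonneg (A x)]
    nlinarith [sq_nonneg (vv x).re, sq_nonneg ‖vv x‖]
  rw [hmg]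
  nlinarith [sq_nonneg (‖a + b‖ - ‖b‖), norm_nonneg (a + b), norm_nonneg b,
    sq_nonneg ((uu x * (starRingEnd ℂ) (vv x)).re),
    mul_nonneg (sq_nonneg ‖uu x‖) (sq_nonneg ‖vv x‖), ha, hsq, hb2]

theorem stmt16 {d : ℕ} (hd : d = 2 ∨ d = 3) (Ω : Set (EuclideanSpace ℝ (Fin d)))
    (hΩopen : IsOpen Ω) (hΩbdd : Bornology.IsBounded Ω) (hΩne : Ω.Nonempty)
    (κ : ℝ) (hκ : 0 < κ)
    (A : EuclideanSpace ℝ (Fin d) → EuclideanSpace ℝ (Fin d))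
    (M : ℝ) (hM : 0 ≤ M) (hA : ∀ x ∈ Ω, ‖A x‖ ≤ M)
    (u : H1 d Ω) (hu : IsGLMinimizer Ω κ A u)
    (hu1 : ∀ᵐ x ∂(volume.restrict Ω), ‖u.toFun x‖ ≤ 1)
    (lam2 : ℝ) (hlam2 : 0 < lam2)
    (hlow : ∀ v : H1 d Ω, PerpPhase Ω u v →
      lam2 * (∫ x in Ω, ‖v.toFun x‖ ^ 2)
        ≤ ∫ x in Ω, (‖magGrad κ A v.toFun v.grad x‖ ^ 2
            + (‖u.toFun x‖ ^ 2 - 1) * ‖v.toFun x‖ ^ 2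
            + 2 * ((u.toFun x * (starRingEnd ℂ) (v.toFun x)).re) ^ 2)) :
    ∀ v : H1 d Ω, PerpPhase Ω u v →
      (lam2 / (2 * (lam2 + 3/2 + M ^ 2))) * H1κnormSq Ω κ v
        ≤ ∫ x in Ω, (‖magGrad κ A v.toFun v.grad x‖ ^ 2
            + (‖u.toFun x‖ ^ 2 - 1) * ‖v.toFun x‖ ^ 2
            + 2 * ((u.toFun x * (starRingEnd ℂ) (v.toFun x)).re) ^ 2) := by
  intro v hv
  have hΩm : MeasurableSet Ω := hΩopen.measurableSet
  have hVsq : Integrable (fun x => ‖v.toFun x‖ ^ 2) (volume.restrict Ω) :=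
    (memLp_two_iff_integrable_sq_norm v.memLp2.aestronglyMeasurable).mp v.memLp2
  have hgsq : Integrable (fun x => ‖v.grad x‖ ^ 2) (volume.restrict Ω) :=
    (memLp_two_iff_integrable_sq_norm v.grad_memLp2.aestronglyMeasurable).mp v.grad_memLp2
  have hN0 : (0:ℝ) ≤ ∫ x in Ω, ‖v.toFun x‖ ^ 2 := integral_nonneg fun x => by positivity
  have hG0 : (0:ℝ) ≤ ∫ x in Ω, ‖v.grad x‖ ^ 2 := integral_nonneg fun x => by positivity
  have hQ2 := hlow v hv
  by_cases hint : Integrable (fun x =>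
      ‖magGrad κ A v.toFun v.grad x‖ ^ 2 + (‖u.toFun x‖ ^ 2 - 1) * ‖v.toFun x‖ ^ 2
        + 2 * ((u.toFun x * (starRingEnd ℂ) (v.toFun x)).re) ^ 2) (volume.restrict Ω)
  · have hmono : ∫ x in Ω, ((1/2) * κ⁻¹ ^ 2 * ‖v.grad x‖ ^ 2 - (M ^ 2 + 1) * ‖v.toFun x‖ ^ 2)
        ≤ ∫ x in Ω, (‖magGrad κ A v.toFun v.grad x‖ ^ 2
            + (‖u.toFun x‖ ^ 2 - 1) * ‖v.toFun x‖ ^ 2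
            + 2 * ((u.toFun x * (starRingEnd ℂ) (v.toFun x)).re) ^ 2) := by
      refine integral_mono_ae ((hgsq.const_mul _).sub (hVsq.const_mul _)) hint ?_
      filter_upwards [ae_restrict_mem hΩm] with x hx
      exact ptBound hκ hM (hA x hx)
    rw [integral_sub (hgsq.const_mul _) (hVsq.const_mul _), integral_const_mul,
      integral_const_mul] at hmono
    have hD : (0:ℝ) < 2 * (lam2 + 3/2 + M ^ 2) := by nlinarith
    simp only [H1κnormSq]
    rw [div_mul_eq_mul_div, div_le_iff₀ hD]
    nlinarith [mul_le_mul_of_nonneg_left hQ2 (by nlinarith : (0:ℝ) ≤ 3 + 2 * M ^ 2),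
      mul_le_mul_of_nonneg_left hmono (le_of_lt hlam2)]
  · exfalso
    rw [integral_undef hint] at hQ2
    have hNz : ∫ x in Ω, ‖v.toFun x‖ ^ 2 = 0 := le_antisymm (by nlinarith) hN0
    have hV0 : (fun x => ‖v.toFun x‖ ^ 2) =ᵐ[volume.restrict Ω] 0 :=
      (integral_eq_zero_iff_of_nonneg_ae
        (Filter.Eventually.of_forall fun x => by positivity) hVsq).mp hNz
    apply hint
    have hcongr : (fun x => κ⁻¹ ^ 2 * ‖v.grad x‖ ^ 2) =ᵐ[volume.restrict Ω]
        (fun x => ‖magGrad κ A v.toFun v.grad x‖ ^ 2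
            + (‖u.toFun x‖ ^ 2 - 1) * ‖v.toFun x‖ ^ 2
            + 2 * ((u.toFun x * (starRingEnd ℂ) (v.toFun x)).re) ^ 2) := by
      filter_upwards [hV0] with x hx
      have hx2 : ‖v.toFun x‖ ^ 2 = 0 := by simpa using hx
      have hx0 : v.toFun x = 0 := by
        have : ‖v.toFun x‖ = 0 := by nlinarith [norm_nonneg (v.toFun x)]
        exact norm_eq_zero.mp this
      have hmg : magGrad κ A v.toFun v.grad x = (Complex.I / (κ:ℂ)) • v.grad x := by
        unfold magGrad
        rw [hx0]
        simp only [mul_zero]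
        rw [show (WithLp.equiv 2 (Fin d → ℂ)).symm (fun _ : Fin d => (0:ℂ)) = 0 from rfl,
          add_zero]
      rw [hmg, hx0]
      simp only [norm_zero, map_zero, mul_zero, Complex.zero_re, norm_smul, norm_div,
        Complex.norm_I, Complex.norm_real, Real.norm_eq_abs, abs_of_pos hκ]
      rw [mul_pow]
      field_simp
      ring
    exact (hgsq.const_mul _).congr hcongr

end
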